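/- arXiv:2211.10500 — 2 statements merged into one kernel-verified Lean document; each statement's English description precedes it below -/
import Mathlib

section
/- Let φ_1,…,φ_r be symmetric polynomials of the shape φ_j(z) = a_j σ_{k_j}(z) − Σ_{l < k_j, l ∈ R} b_{jl} σ_l(z) with a_j nonzero integers and b_{jl} integers. Suppose x, y ∈ ℤ^k satisfy φ_j(x) = φ_j(y) for 1 ≤ j ≤ r, set h_l = σ_l(x) − σ_l(y) for l ∈ R, and suppose that Ψ(t;h) is identically zero as a polynomial in t. Then (x_1,…,x_k) is a permutation of (y_1,…,y_k). -/
open Finset Asymptotics Filter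

/-- The elementary symmetric polynomial `σ_l` evaluated at the integer tuple `x`. -/
def esymm (k l : ℕ) (x : Fin k → ℤ) : ℤ :=
  ∑ s ∈ Finset.powersetCard l (Finset.univ : Finset (Fin k)), ∏ i ∈ s, x i

/-- The number of pairs `(x, y)` of integer `k`-tuples with all entries in `[1, X]`
satisfying the relation `P`. -/
noncomputable def pairCount (k X : ℕ) (P : (Fin k → ℤ) → (Fin k → ℤ) → Prop) : ℕ :=
  Nat.card {p : (Fin k → ℤ) × (Fin k → ℤ) //
    (∀ i, 1 ≤ p.1 i ∧ p.1 i ≤ (X : ℤ)) ∧ (∀ i, 1 ≤ p.2 i ∧ p.2 i ≤ (X : ℤ)) ∧ P p.1 p.2}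

/-- `T_k(X)`: the number of pairs `(x, y)` of integer `k`-tuples with entries in `[1, X]`
for which `y` is a permutation of `x`. -/
noncomputable def permCount (k X : ℕ) : ℕ :=
  pairCount k X (fun x y => ∃ π : Equiv.Perm (Fin k), y = x ∘ π)

/-- The complementary set of exponents `ℛ = {1,…,k} \ {k_1,…,k_r}`. -/
def compSet (k r : ℕ) (kk : Fin r → ℕ) : Finset ℕ :=
  Finset.Icc 1 k \ Finset.image kk Finset.univ

/-- The auxiliary polynomial `Ψ(t; h) = Σ_{l∈ℛ} h_l ψ_l(t)`, where
`ψ_l(t) = A t^{k−l} + Σ_{j : k_j > l} c_j b_{jl} t^{k−k_j}`, `A = a_1 ⋯ a_r` and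
`c_j = A / a_j`. -/
def Psi (k r : ℕ) (kk : Fin r → ℕ) (a : Fin r → ℤ) (b : Fin r → ℕ → ℤ)
    (h : ℕ → ℤ) (t : ℤ) : ℤ :=
  ∑ l ∈ compSet k r kk, h l *
    ((∏ j, a j) * t ^ (k - l) +
      ∑ j ∈ Finset.univ.filter (fun j => l < kk j),
        (∏ i ∈ Finset.univ.erase j, a i) * b j l * t ^ (k - kk j))

/-!
Multiplying the relation `φ_j(x) = φ_j(y)`, i.e. `a_j (σ_{k_j}(x) − σ_{k_j}(y)) = Σ_{l < k_j} b_{jl} h_l`,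
by `c_j` turns the `j`-th term of `Ψ(t;h)` into `A (σ_{k_j}(x) − σ_{k_j}(y)) t^{k−k_j}`, so by Vieta
`Ψ(t;h) = A (∏ (t + x_i) − ∏ (t + y_i))`. Since `A ≠ 0`, the vanishing of `Ψ` makes the polynomials
`∏ (X + x_i)` and `∏ (X + y_i)` equal, and comparing their roots gives the permutation.
-/

open Polynomial

theorem esymm_eq_multiset_esymm (k l : ℕ) (x : Fin k → ℤ) :
    esymm k l x = (univ.val.map x).esymm l :=
  (Finset.esymm_map_val x univ l).symm

theorem esymm_zero_left (k : ℕ) (x : Fin k → ℤ) : esymm k 0 x = 1 := by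
  simp [esymm]

theorem esymm_eq_zero_of_lt {k l : ℕ} (hkl : k < l) (x : Fin k → ℤ) : esymm k l x = 0 := by
  rw [esymm, powersetCard_eq_empty.2 (by simpa using hkl), sum_empty]

theorem esymm_sub_esymm_eq_zero_of_notMem_Icc {k l : ℕ} (hl : l ∉ Icc 1 k) (x y : Fin k → ℤ) :
    esymm k l x - esymm k l y = 0 := by
  rcases Nat.eq_zero_or_pos l with rfl | hl₀
  · simp only [esymm_zero_left, sub_self]
  · have hkl : k < l := by simp only [mem_Icc, not_and_or, not_le] at hl; omega
    simp only [esymm_eq_zero_of_lt hkl, sub_self]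

theorem prod_add_eq_sum_esymm (k : ℕ) (x : Fin k → ℤ) (t : ℤ) :
    ∏ i, (t + x i) = ∑ l ∈ range (k + 1), esymm k l x * t ^ (k - l) := by
  have hvieta := congrArg (eval t) (Multiset.prod_X_add_C_eq_sum_esymm (univ.val.map x))
  simp only [Multiset.map_map, ← prod_eq_multiset_prod, Function.comp_apply, eval_prod,
    eval_finsetSum, eval_add, eval_mul, eval_X, eval_C, eval_pow, Multiset.card_map, card_val,
    card_univ, Fintype.card_fin] at hvieta
  simpa only [esymm_eq_multiset_esymm, add_comm t] using hvieta

theorem roots_prod_X_add_C {ι R : Type*} [CommRing R] [IsDomain R] (s : Finset ι) (f : ι → R) :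
    (∏ i ∈ s, (X + C (f i))).roots = (s.val.map f).map Neg.neg := by
  have h := roots_multiset_prod_X_sub_C ((s.val.map f).map Neg.neg)
  simpa only [Multiset.map_map, ← prod_eq_multiset_prod, Function.comp_apply, map_neg,
    sub_neg_eq_add] using h

theorem exists_perm_eq_comp_of_map_univ_eq {α β : Type*} [Fintype α] {f g : α → β}
    (hfg : univ.val.map f = univ.val.map g) : ∃ σ : Equiv.Perm α, f = g ∘ σ := by
  classical
  have hcard : ∀ c, Fintype.card {a // f a = c} = Fintype.card {a // g a = c} := fun c => by
    simpa [Fintype.card_subtype, Multiset.count_map, eq_comm, card_def, filter_val] using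
      congrArg (Multiset.count c) hfg
  exact ⟨Equiv.ofFiberEquiv fun c => Fintype.equivOfCardEq (hcard c),
    funext fun a => (Equiv.ofFiberEquiv_map _ a).symm⟩

theorem sum_range_eq_sum_compSet_add_sum {M : Type*} [AddCommMonoid M] {k r : ℕ}
    {kk : Fin r → ℕ} (hkk : Function.Injective kk) {f : ℕ → M}
    (hf : ∀ l ∉ Icc 1 k, f l = 0) :
    ∑ l ∈ range (k + 1), f l = ∑ l ∈ compSet k r kk, f l + ∑ j, f (kk j) := by
  have hIcc : ∑ l ∈ Icc 1 k, f l = ∑ l ∈ range (k + 1), f l :=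
    sum_subset (fun l hl => by simp at hl ⊢; omega) fun l _ hl => hf l hl
  have himage : ∑ l ∈ Icc 1 k ∩ univ.image kk, f l = ∑ j, f (kk j) := by
    rw [← sum_image fun i _ j _ hij => hkk hij]
    exact sum_subset inter_subset_right fun l hl hl' =>
      hf l fun h => hl' (mem_inter.2 ⟨h, hl⟩)
  rw [← hIcc, ← sum_inter_add_sum_sdiff (Icc 1 k) (univ.image kk), himage, add_comm]
  rfl

theorem Psi_eq_sum_add_sum (k r : ℕ) (kk : Fin r → ℕ) (a : Fin r → ℤ) (b : Fin r → ℕ → ℤ)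
    (h : ℕ → ℤ) (t : ℤ) :
    Psi k r kk a b h t =
      ∑ l ∈ compSet k r kk, (∏ j, a j) * h l * t ^ (k - l) +
      ∑ j, (∏ i ∈ univ.erase j, a i) *
        (∑ l ∈ (compSet k r kk).filter (fun l => l < kk j), b j l * h l) * t ^ (k - kk j) := by
  simp only [Psi, mul_add, mul_sum, sum_add_distrib]
  congr 1
  · exact sum_congr rfl fun l _ => by ring
  · rw [sum_comm' (t' := univ) (s' := fun j => (compSet k r kk).filter (fun l => l < kk j))
      (by intro l j; simp [and_comm])]
    simp only [sum_mul]
    exact sum_congr rfl fun j _ => sum_congr rfl fun l _ => by ring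

theorem Psi_eq_mul_sub {k r : ℕ} {kk : Fin r → ℕ} (hkk : Function.Injective kk)
    {a : Fin r → ℤ} {b : Fin r → ℕ → ℤ} {x y : Fin k → ℤ}
    (heq : ∀ j,
      a j * esymm k (kk j) x
          - ∑ l ∈ (compSet k r kk).filter (fun l => l < kk j), b j l * esymm k l x =
        a j * esymm k (kk j) y
          - ∑ l ∈ (compSet k r kk).filter (fun l => l < kk j), b j l * esymm k l y)
    {h : ℕ → ℤ} (hh : ∀ l ∈ compSet k r kk, h l = esymm k l x - esymm k l y) (t : ℤ) :
    Psi k r kk a b h t = (∏ j, a j) * (∏ i, (t + x i) - ∏ i, (t + y i)) := by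
  have hphi : ∀ j, a j * (esymm k (kk j) x - esymm k (kk j) y) =
      ∑ l ∈ (compSet k r kk).filter (fun l => l < kk j), b j l * h l := fun j => by
    rw [sum_congr rfl fun l hl => by rw [hh l (mem_filter.1 hl).1, mul_sub], sum_sub_distrib]
    linarith [heq j]
  rw [prod_add_eq_sum_esymm, prod_add_eq_sum_esymm, ← sum_sub_distrib,
    sum_congr rfl fun l _ => (sub_mul _ _ (t ^ (k - l))).symm,
    sum_range_eq_sum_compSet_add_sum hkk fun l hl => by
      rw [esymm_sub_esymm_eq_zero_of_notMem_Icc hl, zero_mul],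
    Psi_eq_sum_add_sum, mul_add, mul_sum, mul_sum]
  congr 1
  · exact sum_congr rfl fun l hl => by rw [hh l hl]; ring
  · refine sum_congr rfl fun j _ => ?_
    rw [← hphi, ← mul_prod_erase univ a (mem_univ j)]
    ring

theorem perm_of_Psi_vanishing_general (k r : ℕ) (kk : Fin r → ℕ)
    (hmono : StrictMono kk)
    (a : Fin r → ℤ) (ha : ∀ j, a j ≠ 0) (b : Fin r → ℕ → ℤ)
    (x y : Fin k → ℤ)
    (heq : ∀ j,
      a j * esymm k (kk j) x
          - ∑ l ∈ (compSet k r kk).filter (fun l => l < kk j), b j l * esymm k l x =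
        a j * esymm k (kk j) y
          - ∑ l ∈ (compSet k r kk).filter (fun l => l < kk j), b j l * esymm k l y)
    (h : ℕ → ℤ) (hh : ∀ l ∈ compSet k r kk, h l = esymm k l x - esymm k l y)
    (hzero : ∀ t : ℤ, Psi k r kk a b h t = 0) :
    ∃ π : Equiv.Perm (Fin k), x = y ∘ π := by
  have hA : ∏ j, a j ≠ 0 := prod_ne_zero_iff.2 fun j _ => ha j
  have hprod : ∏ i, (X + C (x i)) = ∏ i, (X + C (y i)) := Polynomial.funext fun t => by
    have ht := hzero t
    rw [Psi_eq_mul_sub hmono.injective heq hh, mul_eq_zero, sub_eq_zero, or_iff_right hA] at ht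
    simpa [eval_prod] using ht
  have hroots := congrArg roots hprod
  rw [roots_prod_X_add_C, roots_prod_X_add_C] at hroots
  exact exists_perm_eq_comp_of_map_univ_eq (Multiset.map_injective neg_injective hroots)

/-- If `x, y ∈ ℤ^k` satisfy `φ_j(x) = φ_j(y)` for `1 ≤ j ≤ r`, where
`φ_j(z) = a_j σ_{k_j}(z) − Σ_{l < k_j, l ∈ ℛ} b_{jl} σ_l(z)`, with
`h_l = σ_l(x) − σ_l(y)` for `l ∈ ℛ`, and if `Ψ(t;h)` vanishes identically as a polynomial
in `t`, then `(x_1,…,x_k)` is a permutation of `(y_1,…,y_k)`. -/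
theorem perm_of_Psi_vanishing (k r : ℕ) (hr : 0 < r) (kk : Fin r → ℕ)
    (hmono : StrictMono kk) (hfirst : 1 ≤ kk ⟨0, hr⟩)
    (hlast : kk ⟨r - 1, Nat.sub_lt hr Nat.one_pos⟩ = k)
    (a : Fin r → ℤ) (ha : ∀ j, a j ≠ 0) (b : Fin r → ℕ → ℤ)
    (x y : Fin k → ℤ)
    (heq : ∀ j,
      a j * esymm k (kk j) x
          - ∑ l ∈ (compSet k r kk).filter (fun l => l < kk j), b j l * esymm k l x =
        a j * esymm k (kk j) y
          - ∑ l ∈ (compSet k r kk).filter (fun l => l < kk j), b j l * esymm k l y)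
    (h : ℕ → ℤ) (hh : ∀ l ∈ compSet k r kk, h l = esymm k l x - esymm k l y)
    (hzero : ∀ t : ℤ, Psi k r kk a b h t = 0) :
    ∃ π : Equiv.Perm (Fin k), x = y ∘ π :=
  perm_of_Psi_vanishing_general k r kk hmono a ha b x y heq h hh hzero
end

section
/- Let φ_1,…,φ_r be symmetric polynomials of the shape φ_j(z) = a_j σ_{k_j}(z) − Σ_{l < k_j, l ∈ R} b_{jl} σ_l(z) with a_j nonzero integers and b_{jl} integers, with degrees k_1,…,k_r satisfying 1 ≤ k_1 < k_2 < … < k_r = k. Let T_k^†(X;φ) denote the number of non-diagonal solutions, that is, pairs (x,y) with 1 ≤ x_i, y_i ≤ X satisfying φ_j(x) = φ_j(y) (1 ≤ j ≤ r), for which there exists an index j with 1 ≤ j ≤ k such that y_j ∉ {x_1,…,x_k} or x_j ∉ {y_1,…,y_k}. Then for each ε > 0, T_k^†(X;φ) ≪ X^{w(φ)+1+ε}. -/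
open Finset Asymptotics Filter

/-!
Write `d_l = σ_l(x) - σ_l(y)`. On solutions, `a_j d_{k_j} = ∑_{l ∈ ℛ, l < k_j} b_{jl} d_l`, so the
`d_l` with `l ∈ ℛ` determine all of them; since `|d_l| ≤ binom(k, l) X^l` there are `≪ X^{w(φ)}`
possibilities. The `d_l` determine the polynomial `∏ (t - x_i) - ∏ (t - y_i)` in `t`. If
`t = y_j` is missing from `x`, its value at `t` is the nonzero integer `∏ (t - x_i)`, of size at
most `X^k`: choosing `t` (`X` ways) and each `t - x_i` among its `≪ X^ε` divisors fixes `x`.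
Then `x` and the `d_l` fix all `σ_l(y)`, hence the multiset of entries of `y`, leaving at most
`k^k` choices for `y`. An `x_j` missing from `y` is the same case with `x` and `y` swapped.
-/

theorem succ_le_mul_pow {c : ℝ} (hc : 1 < c) (e : ℕ) :
    (e + 1 : ℝ) ≤ max 1 (c - 1)⁻¹ * c ^ e := by
  have hc1 : 0 < c - 1 := by linarith
  calc (e + 1 : ℝ) = 1 + (c - 1)⁻¹ * (e * (c - 1)) := by field_simp; ring
    _ ≤ max 1 (c - 1)⁻¹ + max 1 (c - 1)⁻¹ * (e * (c - 1)) := by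
        gcongr
        exacts [le_max_left _ _, le_max_right _ _]
    _ = max 1 (c - 1)⁻¹ * (1 + e * (c - 1)) := by ring
    _ ≤ max 1 (c - 1)⁻¹ * c ^ e := by
        gcongr
        simpa using one_add_mul_le_pow (a := c - 1) (by linarith) e

theorem exists_card_divisors_le_mul_rpow {δ : ℝ} (hδ : 0 < δ) :
    ∃ C : ℝ, ∀ n : ℕ, n ≠ 0 → (#n.divisors : ℝ) ≤ C * (n : ℝ) ^ δ := by
  set K : ℝ := max 1 ((2 : ℝ) ^ δ - 1)⁻¹
  set P : ℕ := ⌈(2 : ℝ) ^ δ⁻¹⌉₊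
  have hK : 1 ≤ K := le_max_left _ _
  -- primes `p ≤ P` cost a factor `K` each; larger ones have `p ^ δ ≥ 2`
  have hprime : ∀ p e : ℕ, p.Prime →
      (e + 1 : ℝ) ≤ (if p ≤ P then K else 1) * ((p : ℝ) ^ δ) ^ e := by
    intro p e hp
    have hp2 : (2 : ℝ) ≤ p := by exact_mod_cast hp.two_le
    split_ifs with hpP
    · calc (e + 1 : ℝ) ≤ K * ((2 : ℝ) ^ δ) ^ e :=
            succ_le_mul_pow (Real.one_lt_rpow (by norm_num) hδ) e
        _ ≤ K * ((p : ℝ) ^ δ) ^ e := by gcongr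
    · have h2 : (2 : ℝ) ≤ (p : ℝ) ^ δ := by
        have hlt : (2 : ℝ) ^ δ⁻¹ ≤ p :=
          (Nat.le_ceil _).trans (by exact_mod_cast (not_le.mp hpP).le)
        calc (2 : ℝ) = ((2 : ℝ) ^ δ⁻¹) ^ δ := by
              rw [← Real.rpow_mul (by norm_num), inv_mul_cancel₀ hδ.ne', Real.rpow_one]
          _ ≤ (p : ℝ) ^ δ := by gcongr
      calc (e + 1 : ℝ) ≤ 2 ^ e := by exact_mod_cast Nat.lt_two_pow_self
        _ ≤ 1 * ((p : ℝ) ^ δ) ^ e := by rw [one_mul]; gcongr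
  refine ⟨K ^ (P + 1), fun n hn => ?_⟩
  have hsmall : ∏ p ∈ n.primeFactors, (if p ≤ P then K else 1) ≤ K ^ (P + 1) := by
    rw [Finset.prod_ite, Finset.prod_const_one, mul_one, Finset.prod_const]
    refine pow_le_pow_right₀ hK ((card_le_card fun p hp => ?_).trans (card_range _).le)
    exact mem_range.mpr (Nat.lt_succ_of_le (mem_filter.mp hp).2)
  have hpow : (n : ℝ) ^ δ = ∏ p ∈ n.primeFactors, ((p : ℝ) ^ δ) ^ n.factorization p := by
    conv_lhs => rw [← Nat.prod_factorization_pow_eq_self hn]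
    rw [Nat.prod_factorization_eq_prod_primeFactors, Nat.cast_prod,
      ← Real.finsetProd_rpow _ _ fun p _ => by positivity]
    refine prod_congr rfl fun p _ => ?_
    rw [Nat.cast_pow, Real.rpow_pow_comm (Nat.cast_nonneg p)]
  rw [Nat.card_divisors hn, Nat.cast_prod, hpow]
  calc ∏ p ∈ n.primeFactors, ((n.factorization p + 1 : ℕ) : ℝ)
      ≤ ∏ p ∈ n.primeFactors,
          (if p ≤ P then K else 1) * ((p : ℝ) ^ δ) ^ n.factorization p := by
        refine prod_le_prod (fun _ _ => by positivity) fun p hp => ?_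
        exact_mod_cast hprime p _ (Nat.prime_of_mem_primeFactors hp)
    _ ≤ K ^ (P + 1) * ∏ p ∈ n.primeFactors, ((p : ℝ) ^ δ) ^ n.factorization p := by
        rw [prod_mul_distrib]
        gcongr

theorem Int.card_divisors (z : ℤ) : #z.divisors = 2 * #z.natAbs.divisors := by
  rw [Int.divisors, card_disjUnion, card_map, card_map, two_mul]

open Polynomial in
theorem prod_X_sub_C_eq_sum_esymm {k : ℕ} (x : Fin k → ℤ) :
    ∏ i, (X - C (x i)) = ∑ l ∈ range (k + 1), (-1) ^ l * (C (esymm k l x) * X ^ (k - l)) := by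
  have h := Multiset.prod_X_sub_X_eq_sum_esymm (univ.val.map x)
  rw [Multiset.map_map, Multiset.card_map, card_val, card_univ, Fintype.card_fin] at h
  simp only [esymm, ← Finset.esymm_map_val]
  exact h

theorem prod_sub_eq_sum_esymm {k : ℕ} (x : Fin k → ℤ) (t : ℤ) :
    ∏ i, (t - x i) = ∑ l ∈ range (k + 1), (-1) ^ l * esymm k l x * t ^ (k - l) := by
  have h := congrArg (Polynomial.eval t) (prod_X_sub_C_eq_sum_esymm x)
  simpa [Polynomial.eval_prod, Polynomial.eval_finsetSum, mul_assoc] using h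

theorem map_univ_eq_of_esymm_eq {k : ℕ} {x y : Fin k → ℤ}
    (h : ∀ l ≤ k, esymm k l x = esymm k l y) : univ.val.map x = univ.val.map y := by
  have hprod : ∏ i, (Polynomial.X - Polynomial.C (x i)) =
      ∏ i, (Polynomial.X - Polynomial.C (y i)) := by
    rw [prod_X_sub_C_eq_sum_esymm, prod_X_sub_C_eq_sum_esymm]
    exact sum_congr rfl fun l hl => by rw [h l (Nat.lt_succ_iff.mp (mem_range.mp hl))]
  have hroots : ∀ z : Fin k → ℤ,
      (∏ i, (Polynomial.X - Polynomial.C (z i))).roots = univ.val.map z := by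
    intro z
    conv_rhs => rw [← Polynomial.roots_multiset_prod_X_sub_C (univ.val.map z)]
    rw [Multiset.map_map, prod_eq_multiset_prod]
    rfl
  rw [← hroots x, ← hroots y, hprod]

theorem esymm_zero {k : ℕ} (x : Fin k → ℤ) : esymm k 0 x = 1 := by
  simp [esymm]

theorem esymm_of_lt {k l : ℕ} (hl : k < l) (x : Fin k → ℤ) : esymm k l x = 0 := by
  rw [esymm, powersetCard_eq_empty.mpr (by rwa [card_univ, Fintype.card_fin]), sum_empty]

noncomputable def cube (k X : ℕ) : Finset (Fin k → ℤ) :=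
  Fintype.piFinset fun _ => Icc 1 (X : ℤ)

theorem esymm_mem_Icc {k X : ℕ} {x : Fin k → ℤ} (hx : x ∈ cube k X) (l : ℕ) :
    esymm k l x ∈ Icc 0 (k.choose l * (X : ℤ) ^ l) := by
  have hx' : ∀ i, x i ∈ Icc 1 (X : ℤ) := Fintype.mem_piFinset.mp hx
  have hmon : ∀ s ∈ powersetCard l (univ : Finset (Fin k)),
      ∏ i ∈ s, x i ∈ Icc 0 ((X : ℤ) ^ l) := by
    intro s hs
    rw [← (mem_powersetCard.mp hs).2, ← prod_const]
    exact mem_Icc.mpr ⟨prod_nonneg fun i _ => by linarith [(mem_Icc.mp (hx' i)).1],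
      prod_le_prod (fun i _ => by linarith [(mem_Icc.mp (hx' i)).1])
        fun i _ => (mem_Icc.mp (hx' i)).2⟩
  refine mem_Icc.mpr ⟨sum_nonneg fun s hs => (mem_Icc.mp (hmon s hs)).1, ?_⟩
  calc esymm k l x ≤ #(powersetCard l (univ : Finset (Fin k))) • (X : ℤ) ^ l :=
        sum_le_card_nsmul _ _ _ fun s hs => (mem_Icc.mp (hmon s hs)).2
    _ = k.choose l * (X : ℤ) ^ l := by
        rw [card_powersetCard, card_univ, Fintype.card_fin, nsmul_eq_mul]

def esymmDiff {k : ℕ} (x y : Fin k → ℤ) (l : ℕ) : ℤ := esymm k l x - esymm k l y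

def vietaSum (k : ℕ) (v : ℕ → ℤ) (t : ℤ) : ℤ := ∑ l ∈ range (k + 1), (-1) ^ l * v l * t ^ (k - l)

theorem prod_sub_sub_prod_sub {k : ℕ} (x y : Fin k → ℤ) (t : ℤ) :
    ∏ i, (t - x i) - ∏ i, (t - y i) = vietaSum k (esymmDiff x y) t := by
  rw [prod_sub_eq_sum_esymm, prod_sub_eq_sum_esymm, vietaSum, ← sum_sub_distrib]
  exact sum_congr rfl fun l _ => by rw [esymmDiff]; ring

theorem card_filter_prod_sub_eq_le {k X T : ℕ}
    (hT : ∀ n, 0 < n → n ≤ X ^ k → #n.divisors ≤ T) {t N : ℤ} (ht : t ∈ Icc 1 (X : ℤ))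
    (hN : N ≠ 0) : #{x ∈ cube k X | ∏ i, (t - x i) = N} ≤ (2 * T) ^ k := by
  rcases eq_empty_or_nonempty {x ∈ cube k X | ∏ i, (t - x i) = N} with hempty | ⟨x₀, hx₀⟩
  · simp [hempty]
  obtain ⟨hx₀_mem, rfl⟩ := mem_filter.mp hx₀
  have hdiv : #(∏ i, (t - x₀ i)).divisors ≤ 2 * T := by
    rw [Int.card_divisors]
    refine Nat.mul_le_mul_left 2 (hT _ (Int.natAbs_pos.mpr hN) ?_)
    rw [show (∏ i, (t - x₀ i)).natAbs = ∏ i, (t - x₀ i).natAbs from map_prod Int.natAbsHom _ _,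
      ← Fin.prod_const]
    refine prod_le_prod' fun i _ => ?_
    have := mem_Icc.mp (Fintype.mem_piFinset.mp hx₀_mem i)
    have := mem_Icc.mp ht
    omega
  calc #{x ∈ cube k X | ∏ i, (t - x i) = ∏ i, (t - x₀ i)}
      ≤ #(Fintype.piFinset fun _ : Fin k => (∏ i, (t - x₀ i)).divisors.image (t - ·)) := by
        refine card_le_card fun x hx => Fintype.mem_piFinset.mpr fun i => ?_
        obtain ⟨-, hx⟩ := mem_filter.mp hx
        refine mem_image.mpr ⟨t - x i, Int.mem_divisors.mpr ⟨?_, hN⟩, sub_sub_cancel t (x i)⟩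
        exact hx ▸ dvd_prod_of_mem _ (mem_univ i)
    _ ≤ (2 * T) ^ k := by
        rw [Fintype.card_piFinset, prod_const, card_univ, Fintype.card_fin]
        exact Nat.pow_le_pow_left (card_image_le.trans hdiv) k

theorem card_le_pow_of_esymm_eq {k : ℕ} (s : Finset (Fin k → ℤ)) (y₀ : Fin k → ℤ)
    (hs : ∀ y ∈ s, ∀ l ≤ k, esymm k l y = esymm k l y₀) : #s ≤ k ^ k := by
  calc #s ≤ #(Fintype.piFinset fun _ : Fin k => (univ.val.map y₀).toFinset) := by
        refine card_le_card fun y hy => Fintype.mem_piFinset.mpr fun i => ?_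
        rw [Multiset.mem_toFinset, ← map_univ_eq_of_esymm_eq (hs y hy)]
        exact Multiset.mem_map_of_mem y (mem_univ i)
    _ ≤ k ^ k := by
        rw [Fintype.card_piFinset, prod_const, card_univ, Fintype.card_fin]
        refine Nat.pow_le_pow_left ((Multiset.toFinset_card_le _).trans ?_) k
        simp

open scoped Classical in
theorem card_filter_esymmDiff_eq_le {k X T : ℕ}
    (hT : ∀ n, 0 < n → n ≤ X ^ k → #n.divisors ≤ T) (v : ℕ → ℤ) :
    #{p ∈ cube k X ×ˢ cube k X | (∃ j, p.2 j ∉ Set.range p.1) ∧ esymmDiff p.1 p.2 = v} ≤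
      k ^ k * (X * (2 * T) ^ k) := by
  set F := {p ∈ cube k X ×ˢ cube k X | (∃ j, p.2 j ∉ Set.range p.1) ∧ esymmDiff p.1 p.2 = v}
  -- a value `t = y j` missing from `x` makes `∏ (t - x i) = vietaSum k v t` a nonzero multiple
  -- of every `t - x i`
  set candidates := {t ∈ Icc 1 (X : ℤ) | vietaSum k v t ≠ 0}.biUnion
    fun t => {x ∈ cube k X | ∏ i, (t - x i) = vietaSum k v t}
  have hfirst : ∀ p ∈ F, p.1 ∈ candidates := by
    intro p hp
    obtain ⟨hbox, ⟨j, hj⟩, hv⟩ := mem_filter.mp hp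
    obtain ⟨hx, hy⟩ := mem_product.mp hbox
    have hprod : ∏ i, (p.2 j - p.1 i) = vietaSum k v (p.2 j) := by
      rw [← hv, ← prod_sub_sub_prod_sub,
        prod_eq_zero (f := fun i => p.2 j - p.2 i) (mem_univ j) (sub_self _), sub_zero]
    have hne : ∏ i, (p.2 j - p.1 i) ≠ 0 :=
      prod_ne_zero_iff.mpr fun i _ h => hj ⟨i, (sub_eq_zero.mp h).symm⟩
    exact mem_biUnion.mpr ⟨p.2 j, mem_filter.mpr ⟨Fintype.mem_piFinset.mp hy j, hprod ▸ hne⟩,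
      mem_filter.mpr ⟨hx, hprod⟩⟩
  have hfibre : ∀ x ∈ candidates, #{p ∈ F | p.1 = x} ≤ k ^ k := by
    intro x _
    rcases eq_empty_or_nonempty {p ∈ F | p.1 = x} with hempty | ⟨p₀, hp₀⟩
    · simp [hempty]
    rw [← card_image_of_injOn fun p hp q hq h =>
      Prod.ext ((mem_filter.mp hp).2.trans (mem_filter.mp hq).2.symm) h]
    refine card_le_pow_of_esymm_eq _ p₀.2 fun y hy l _ => ?_
    obtain ⟨p, hp, rfl⟩ := mem_image.mp hy
    obtain ⟨hpF, rfl⟩ := mem_filter.mp hp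
    obtain ⟨hp₀F, hp₀x⟩ := mem_filter.mp hp₀
    have h := congrFun ((mem_filter.mp hpF).2.2.trans (mem_filter.mp hp₀F).2.2.symm) l
    rw [esymmDiff, esymmDiff, hp₀x] at h
    linarith
  calc #F ≤ k ^ k * #candidates := card_le_mul_card_image_of_maps_to hfirst _ hfibre
    _ ≤ k ^ k * (X * (2 * T) ^ k) := by
        refine Nat.mul_le_mul_left _ (card_biUnion_le.trans ?_)
        calc _ ≤ #{t ∈ Icc 1 (X : ℤ) | vietaSum k v t ≠ 0} • (2 * T) ^ k :=
              sum_le_card_nsmul _ _ _ fun t ht =>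
                card_filter_prod_sub_eq_le hT (mem_filter.mp ht).1 (mem_filter.mp ht).2
          _ ≤ X * (2 * T) ^ k := by
              rw [smul_eq_mul]
              exact Nat.mul_le_mul_right _ ((card_filter_le _ _).trans (by simp))

theorem esymmDiff_mem_Icc {k X : ℕ} {x y : Fin k → ℤ} (hx : x ∈ cube k X) (hy : y ∈ cube k X)
    (l : ℕ) : esymmDiff x y l ∈ Icc (-(k.choose l * (X : ℤ) ^ l)) (k.choose l * (X : ℤ) ^ l) := by
  have := mem_Icc.mp (esymm_mem_Icc hx l)
  have := mem_Icc.mp (esymm_mem_Icc hy l)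
  exact mem_Icc.mpr ⟨by rw [esymmDiff]; linarith, by rw [esymmDiff]; linarith⟩

theorem card_piFinset_Icc_choose_le {k X : ℕ} (hX : 1 ≤ X) (R : Finset ℕ)
    (hR : ∀ m ∈ R, m ≤ k) :
    #(Fintype.piFinset fun m : R =>
        Icc (-(k.choose m * (X : ℤ) ^ (m : ℕ))) (k.choose m * (X : ℤ) ^ (m : ℕ))) ≤
      (∏ m ∈ R, 3 * k.choose m) * X ^ ∑ m ∈ R, m := by
  rw [Fintype.card_piFinset, ← prod_pow_eq_pow_sum, ← prod_mul_distrib, ← prod_coe_sort R]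
  refine prod_le_prod' fun m _ => ?_
  have hprod : 1 ≤ k.choose m * X ^ (m : ℕ) :=
    one_le_mul (Nat.choose_pos (hR m m.2)) (Nat.one_le_pow _ _ hX)
  rw [Int.card_Icc, sub_neg_eq_add, show (k.choose m * (X : ℤ) ^ (m : ℕ) + 1 +
      k.choose m * (X : ℤ) ^ (m : ℕ)) = ((2 * (k.choose m * X ^ (m : ℕ)) + 1 : ℕ) : ℤ) by
    push_cast; ring, Int.toNat_natCast]
  linarith

theorem pairCount_eq_card_filter (k X : ℕ) (P : (Fin k → ℤ) → (Fin k → ℤ) → Prop)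
    [DecidablePred fun p : (Fin k → ℤ) × (Fin k → ℤ) => P p.1 p.2] :
    pairCount k X P = #{p ∈ cube k X ×ˢ cube k X | P p.1 p.2} := by
  rw [pairCount, ← Nat.card_eq_finsetCard]
  exact Nat.card_congr (Equiv.subtypeEquivRight fun p => by
    simp [cube, Fintype.mem_piFinset, and_assoc])

open scoped Classical in
theorem pairCount_le_two_mul (k X : ℕ) (P : (Fin k → ℤ) → (Fin k → ℤ) → Prop) [DecidableRel P]
    (hP : ∀ x y, P x y → P y x) :
    pairCount k X (fun x y => P x y ∧ ∃ j, y j ∉ Set.range x ∨ x j ∉ Set.range y) ≤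
      2 * #{p ∈ cube k X ×ˢ cube k X | P p.1 p.2 ∧ ∃ j, p.2 j ∉ Set.range p.1} := by
  set S := {p ∈ cube k X ×ˢ cube k X | P p.1 p.2 ∧ ∃ j, p.2 j ∉ Set.range p.1}
  rw [pairCount_eq_card_filter, two_mul]
  calc _ ≤ #(S ∪ S.image Prod.swap) := card_le_card fun p hp => ?_
    _ ≤ #S + #(S.image Prod.swap) := card_union_le _ _
    _ ≤ #S + #S := Nat.add_le_add_left card_image_le _
  obtain ⟨hbox, hp, j, hj | hj⟩ := mem_filter.mp hp
  · exact mem_union_left _ (mem_filter.mpr ⟨hbox, hp, j, hj⟩)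
  · refine mem_union_right _ (mem_image.mpr ⟨p.swap, mem_filter.mpr ?_, p.swap_swap⟩)
    exact ⟨mem_product.mpr ⟨(mem_product.mp hbox).2, (mem_product.mp hbox).1⟩, hP _ _ hp, j, hj⟩

theorem sum_Icc_id (k : ℕ) : (∑ m ∈ Icc 1 k, m : ℝ) = k * (k + 1) / 2 := by
  induction k with
  | zero => simp
  | succ k ih =>
    rw [sum_Icc_succ_top (by omega), ih]
    push_cast
    ring

theorem sum_compSet {k r : ℕ} {kk : Fin r → ℕ} (hinj : Function.Injective kk)
    (hkk : ∀ j, kk j ∈ Icc 1 k) :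
    (∑ m ∈ compSet k r kk, m : ℝ) = k * (k + 1) / 2 - ∑ j, (kk j : ℝ) := by
  have hsub : univ.image kk ⊆ Icc 1 k := fun m hm => by
    obtain ⟨j, -, rfl⟩ := mem_image.mp hm
    exact hkk j
  rw [← sum_Icc_id, ← sum_sdiff hsub, sum_image fun j _ j' _ h => hinj h, compSet]
  ring

section System

variable {k r : ℕ} {kk : Fin r → ℕ} {a : Fin r → ℤ} {b : Fin r → ℕ → ℤ}
  {φ : Fin r → (Fin k → ℤ) → ℤ}

theorem mul_esymmDiff_eq_sum
    (hφ : ∀ j z, φ j z =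
      a j * esymm k (kk j) z
        - ∑ l ∈ (compSet k r kk).filter (fun l => l < kk j), b j l * esymm k l z)
    {x y : Fin k → ℤ} (hxy : ∀ j, φ j x = φ j y) (j : Fin r) :
    a j * esymmDiff x y (kk j) =
      ∑ l ∈ (compSet k r kk).filter (fun l => l < kk j), b j l * esymmDiff x y l := by
  have h := hxy j
  rw [hφ, hφ] at h
  simp only [esymmDiff, mul_sub, sum_sub_distrib]
  linarith

theorem esymmDiff_eq_of_eqOn_compSet (ha : ∀ j, a j ≠ 0)
    (hφ : ∀ j z, φ j z =
      a j * esymm k (kk j) z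
        - ∑ l ∈ (compSet k r kk).filter (fun l => l < kk j), b j l * esymm k l z)
    {x y x' y' : Fin k → ℤ} (hxy : ∀ j, φ j x = φ j y) (hxy' : ∀ j, φ j x' = φ j y')
    (h : ∀ m ∈ compSet k r kk, esymmDiff x y m = esymmDiff x' y' m) :
    esymmDiff x y = esymmDiff x' y' := by
  funext m
  by_cases hR : m ∈ compSet k r kk
  · exact h m hR
  by_cases hk : ∃ j, kk j = m
  · obtain ⟨j, rfl⟩ := hk
    refine mul_left_cancel₀ (ha j) ?_
    rw [mul_esymmDiff_eq_sum hφ hxy, mul_esymmDiff_eq_sum hφ hxy']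
    exact sum_congr rfl fun l hl => by rw [h l (mem_filter.mp hl).1]
  have hm : m = 0 ∨ k < m := by
    by_contra! hm
    exact hR (mem_sdiff.mpr ⟨mem_Icc.mpr ⟨Nat.one_le_iff_ne_zero.mpr hm.1, hm.2⟩,
      fun hmem => hk (by simpa using hmem)⟩)
  rcases hm with rfl | hm
  · simp [esymmDiff, esymm_zero]
  · simp [esymmDiff, esymm_of_lt hm]

open scoped Classical in
theorem card_nondiag_solutions_le {X T : ℕ} (ha : ∀ j, a j ≠ 0)
    (hφ : ∀ j z, φ j z =
      a j * esymm k (kk j) z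
        - ∑ l ∈ (compSet k r kk).filter (fun l => l < kk j), b j l * esymm k l z)
    (hX : 1 ≤ X) (hT : ∀ n, 0 < n → n ≤ X ^ k → #n.divisors ≤ T) :
    #{p ∈ cube k X ×ˢ cube k X | (∀ j, φ j p.1 = φ j p.2) ∧ ∃ j, p.2 j ∉ Set.range p.1} ≤
      k ^ k * (X * (2 * T) ^ k) *
        ((∏ m ∈ compSet k r kk, 3 * k.choose m) * X ^ ∑ m ∈ compSet k r kk, m) := by
  set S := {p ∈ cube k X ×ˢ cube k X | (∀ j, φ j p.1 = φ j p.2) ∧ ∃ j, p.2 j ∉ Set.range p.1}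
  refine (card_le_mul_card_image_of_maps_to
    (f := fun p (m : compSet k r kk) => esymmDiff p.1 p.2 m) (fun p hp => ?_) _
    fun c _ => ?_).trans (Nat.mul_le_mul_left _ (card_piFinset_Icc_choose_le hX _
      fun m hm => (mem_Icc.mp (mem_sdiff.mp hm).1).2))
  · obtain ⟨hx, hy⟩ := mem_product.mp (mem_filter.mp hp).1
    exact Fintype.mem_piFinset.mpr fun m => esymmDiff_mem_Icc hx hy m
  rcases eq_empty_or_nonempty {p ∈ S | (fun m : compSet k r kk => esymmDiff p.1 p.2 m) = c}
    with hempty | ⟨p₀, hp₀⟩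
  · simp [hempty]
  obtain ⟨hp₀S, rfl⟩ := mem_filter.mp hp₀
  refine (card_le_card fun p hp => ?_).trans (card_filter_esymmDiff_eq_le hT
    (esymmDiff p₀.1 p₀.2))
  obtain ⟨hpS, hpc⟩ := mem_filter.mp hp
  obtain ⟨hbox, hsol, hmiss⟩ := mem_filter.mp hpS
  refine mem_filter.mpr ⟨hbox, hmiss, esymmDiff_eq_of_eqOn_compSet ha hφ hsol
    (mem_filter.mp hp₀S).2.1 fun m hm => congrFun hpc ⟨m, hm⟩⟩

theorem exists_pairCount_le_mul_rpow (ha : ∀ j, a j ≠ 0)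
    (hφ : ∀ j z, φ j z =
      a j * esymm k (kk j) z
        - ∑ l ∈ (compSet k r kk).filter (fun l => l < kk j), b j l * esymm k l z)
    (hk : 1 ≤ k) {ε : ℝ} (hε : 0 < ε) :
    ∃ K : ℝ, ∀ X : ℕ, 1 ≤ X →
      (pairCount k X (fun x y => (∀ j, φ j x = φ j y) ∧
          ∃ j : Fin k, y j ∉ Set.range x ∨ x j ∉ Set.range y) : ℝ) ≤
        K * (X : ℝ) ^ ((∑ m ∈ compSet k r kk, m : ℝ) + 1 + ε) := by
  set δ := ε / k ^ 2
  obtain ⟨C, hC⟩ := exists_card_divisors_le_mul_rpow (δ := δ) (by positivity)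
  have hC0 : 0 ≤ C := zero_le_one.trans (by simpa using hC 1 one_ne_zero)
  set P := ∏ m ∈ compSet k r kk, 3 * k.choose m
  refine ⟨2 * k ^ k * P * (2 * C) ^ k, fun X hX => ?_⟩
  have hX0 : (0 : ℝ) ≤ X := X.cast_nonneg
  set T := ⌊C * (X : ℝ) ^ (k * δ)⌋₊
  have hT : ∀ n, 0 < n → n ≤ X ^ k → #n.divisors ≤ T := fun n hn hnX => by
    refine Nat.le_floor ((hC n hn.ne').trans ?_)
    rw [Real.rpow_natCast_mul hX0]
    gcongr
    exact_mod_cast hnX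
  have hcount := (pairCount_le_two_mul k X (fun x y => ∀ j, φ j x = φ j y)
    fun x y h j => (h j).symm).trans
    (Nat.mul_le_mul_left 2 (card_nondiag_solutions_le ha hφ hX hT))
  have hTC : (T : ℝ) ≤ C * (X : ℝ) ^ (k * δ) := Nat.floor_le (by positivity)
  have hpow : ((X : ℝ) ^ (k * δ)) ^ k = (X : ℝ) ^ ε := by
    rw [← Real.rpow_mul_natCast hX0]
    have : (k : ℝ) ≠ 0 := by positivity
    congr 1
    simp only [δ]
    field_simp
  calc (pairCount k X _ : ℝ)
      ≤ 2 * k ^ k * P * (2 * T) ^ k * ((X : ℝ) ^ (∑ m ∈ compSet k r kk, m) * X) := by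
        exact_mod_cast hcount.trans_eq (by ring)
    _ ≤ 2 * k ^ k * P * (2 * (C * (X : ℝ) ^ (k * δ))) ^ k *
          ((X : ℝ) ^ (∑ m ∈ compSet k r kk, m) * X) := by gcongr
    _ = 2 * k ^ k * P * (2 * C) ^ k * (X : ℝ) ^ ((∑ m ∈ compSet k r kk, m : ℝ) + 1 + ε) := by
        have hpos : (0 : ℝ) < X := by exact_mod_cast hX
        rw [Real.rpow_add hpos, Real.rpow_add hpos, Real.rpow_one, ← Nat.cast_sum,
          Real.rpow_natCast, ← hpow]
        ring

end System

/-- The bound (2.11). With `φ_j(z) = a_j σ_{k_j}(z) − Σ_{l < k_j, l ∈ ℛ} b_{jl} σ_l(z)`,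
the number `T_k^†(X;φ)` of non-diagonal solutions, i.e. pairs `(x,y)` with
`1 ≤ x_i, y_i ≤ X` satisfying `φ_j(x) = φ_j(y)` for all `j`, for which some `y_j` avoids
`{x_1,…,x_k}` or some `x_j` avoids `{y_1,…,y_k}`, satisfies
`T_k^†(X;φ) ≪ X^{w(φ)+1+ε}`. -/
theorem nondiagonal_bound (k r : ℕ) (hr : 0 < r) (kk : Fin r → ℕ)
    (hmono : StrictMono kk) (hfirst : 1 ≤ kk ⟨0, hr⟩)
    (hlast : kk ⟨r - 1, Nat.sub_lt hr Nat.one_pos⟩ = k)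
    (a : Fin r → ℤ) (ha : ∀ j, a j ≠ 0) (b : Fin r → ℕ → ℤ)
    (φ : Fin r → (Fin k → ℤ) → ℤ)
    (hφ : ∀ j z, φ j z =
      a j * esymm k (kk j) z
        - ∑ l ∈ (compSet k r kk).filter (fun l => l < kk j), b j l * esymm k l z)
    (ε : ℝ) (hε : 0 < ε) :
    (fun X : ℕ =>
        (pairCount k X (fun x y => (∀ j, φ j x = φ j y) ∧
          ∃ j : Fin k, y j ∉ Set.range x ∨ x j ∉ Set.range y) : ℝ))
      =O[atTop]
      fun X : ℕ => (X : ℝ) ^ ((k * (k + 1) : ℝ) / 2 - (∑ j, (kk j : ℝ)) + 1 + ε) := by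
  have hkk : ∀ j, kk j ∈ Icc 1 k := fun j => mem_Icc.mpr
    ⟨hfirst.trans (hmono.monotone (Fin.mk_le_of_le_val (Nat.zero_le _))),
      (hmono.monotone (Fin.le_iff_val_le_val.mpr (Nat.le_sub_one_of_lt j.2))).trans hlast.le⟩
  obtain ⟨K, hK⟩ := exists_pairCount_le_mul_rpow ha hφ
    ((mem_Icc.mp (hkk ⟨0, hr⟩)).1.trans (mem_Icc.mp (hkk ⟨0, hr⟩)).2) hε
  rw [← sum_compSet hmono.injective hkk]
  refine IsBigO.of_bound K (eventually_atTop.mpr ⟨1, fun X hX => ?_⟩)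
  rw [Real.norm_of_nonneg (by positivity), Real.norm_of_nonneg (by positivity)]
  exact hK X hX
end
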